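/- arXiv:math/0102122 — 2 statements merged into one kernel-verified Lean document; each statement's English description precedes it below -/
import Mathlib

section
/- (Lemma on R_{c,ε}, case a.) Let d ≥ 1, let c ∈ ℕA_d with deg c = s ≥ 3, and let ε ∈ {1,…,⌊(s+1)/2⌋}. If the geometric realization |Δ_{(c,ε−1)}| is nonempty and path-connected, then |R_{c,ε}| is nonempty and path-connected. -/
open CategoryTheory

noncomputable section

/-- The set `A_d ⊆ ℤ^{1+d}` of vectors whose first coordinate is `1` and whose
remaining coordinates are `0` or `1`. -/
def Avec (d : ℕ) : Set (Fin (d + 1) → ℤ) :=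
  {v | v 0 = 1 ∧ ∀ i, i ≠ 0 → v i = 0 ∨ v i = 1}

/-- `ℕA_d`, the additive submonoid of `ℤ^{1+d}` generated by `A_d`. -/
def NA (d : ℕ) : AddSubmonoid (Fin (d + 1) → ℤ) :=
  AddSubmonoid.closure (Avec d)

/-- `ℝ^{A_d}`. -/
abbrev RA (d : ℕ) : Type := ↥(Avec d) → ℝ

/-- The standard basis vector of `ℝ^{A_d}` indexed by `a ∈ A_d`. -/
def eVec {d : ℕ} (a : ↥(Avec d)) : RA d :=
  fun x => if x = a then 1 else 0

/-- The geometric realization `|Δ_b| ⊆ ℝ^{A_d}`: the union over all tuples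
`(a_1, …, a_k)` of elements of `A_d` with `a_1 + ⋯ + a_k = b` of the convex hulls
`conv {e_{a_1}, …, e_{a_k}}`.  (Any such tuple automatically has length `k = deg b`.) -/
def Delta (d : ℕ) (b : Fin (d + 1) → ℤ) : Set (RA d) :=
  ⋃ (k : ℕ) (f : Fin k → ↥(Avec d)) (_ : ∑ i, (f i : Fin (d + 1) → ℤ) = b),
    convexHull ℝ (Set.range fun i => eVec (f i))

lemma snoc_mem_Avec {d : ℕ} {a : Fin (d + 1) → ℤ} (ha : a ∈ Avec d) {χ : ℤ}
    (hχ : χ = 0 ∨ χ = 1) : Fin.snoc a χ ∈ Avec (d + 1) := by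
  constructor
  · have h0 : (0 : Fin (d + 2)) = Fin.castSucc 0 := rfl
    rw [h0, Fin.snoc_castSucc]
    exact ha.1
  · intro i hi
    induction i using Fin.lastCases with
    | last => rw [Fin.snoc_last]; exact hχ
    | cast j =>
      rw [Fin.snoc_castSucc]
      rcases eq_or_ne j 0 with hj | hj
      · exact absurd (by simp [hj]) hi
      · exact ha.2 j hj

/-- Appending a last coordinate `0` to an element of `A_d`. -/
def app0 {d : ℕ} (a : ↥(Avec d)) : ↥(Avec (d + 1)) :=
  ⟨Fin.snoc ↑a 0, snoc_mem_Avec a.2 (Or.inl rfl)⟩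

/-- Appending a last coordinate `1` to an element of `A_d`. -/
def app1 {d : ℕ} (a : ↥(Avec d)) : ↥(Avec (d + 1)) :=
  ⟨Fin.snoc ↑a 1, snoc_mem_Avec a.2 (Or.inr rfl)⟩

/-- The realization `|R_{c,ε}| ⊆ ℝ^{A_{d+1}}`: the union over tuples
`(α_1, …, α_s)` of elements of `A_d` with `α_1 + ⋯ + α_s = c` and over sequences of
pairwise distinct indices `i_1, …, i_{s-1}` of the convex hulls of
`e_{(α_{i_1},1)}, …, e_{(α_{i_{ε-1}},1)}, e_{(α_{i_ε},0)}, …, e_{(α_{i_{s-1}},0)}`. -/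
def Rset (d : ℕ) (c : Fin (d + 1) → ℤ) (ε : ℕ) : Set (RA (d + 1)) :=
  ⋃ (s : ℕ) (α : Fin s → ↥(Avec d)) (_ : ∑ i, (α i : Fin (d + 1) → ℤ) = c)
    (g : Fin (s - 1) → Fin s) (_ : Function.Injective g),
    convexHull ℝ (Set.range fun j : Fin (s - 1) =>
      eVec (if (j : ℕ) < ε - 1 then app1 (α (g j)) else app0 (α (g j))))

/-- The realization `|F^l(Δ_b)| ⊆ ℝ^{A_{d+1}}`: the union over tuples
`(a_1, …, a_k)` of elements of `A_d` with `a_1 + ⋯ + a_k = b` and over indices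
`i_0, …, i_l ∈ {1, …, k}` of the convex hulls of `e_{(a_{i_0},0)}, …, e_{(a_{i_l},0)}`. -/
def Fset (d : ℕ) (b : Fin (d + 1) → ℤ) (l : ℕ) : Set (RA (d + 1)) :=
  ⋃ (k : ℕ) (a : Fin k → ↥(Avec d)) (_ : ∑ i, (a i : Fin (d + 1) → ℤ) = b)
    (idx : Fin (l + 1) → Fin k),
    convexHull ℝ (Set.range fun j => eVec (app0 (a (idx j))))

/-- The set `|S'_ε| ⊆ ℝ^{A_{d+1}}` associated to `S = ⟨a_1, …, a_k⟩`: the union over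
all `(χ_1, …, χ_k) ∈ {0,1}^k` with exactly `ε` entries equal to `1` of the convex hulls
`conv {e_{(a_1,χ_1)}, …, e_{(a_k,χ_k)}}`. -/
def Sprime {d k : ℕ} (a : Fin k → ↥(Avec d)) (ε : ℕ) : Set (RA (d + 1)) :=
  ⋃ (χ : Fin k → Bool) (_ : (Finset.univ.filter fun i => χ i = true).card = ε),
    convexHull ℝ (Set.range fun i => eVec (if χ i then app1 (a i) else app0 (a i)))

/-- The singular chain complex of a topological space with `ℂ` coefficients. -/
def singularChains : TopCat.{0} ⥤ ChainComplex (ModuleCat.{0} ℂ) ℕ :=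
  TopCat.toSSet ⋙ ((SimplicialObject.whiskering _ _).obj (ModuleCat.free ℂ)) ⋙
    AlgebraicTopology.alternatingFaceMapComplex (ModuleCat.{0} ℂ)

/-- Singular homology with `ℂ` coefficients, as a functor. -/
def SH (n : ℕ) : TopCat.{0} ⥤ ModuleCat.{0} ℂ :=
  singularChains ⋙ HomologicalComplex.homologyFunctor (ModuleCat.{0} ℂ) (ComplexShape.down ℕ) n

end

/-!
The simplices of `|Δ_{(c,ε-1)}|` are the `conv {e_{(α_i, χ_i)}}` for
decompositions `c = α_1 + ⋯ + α_s` together with a marking `χ ∈ {0,1}^s` with exactly `ε - 1` ones.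
Deleting a vertex marked `0` gives a facet, and `|R_{c,ε}|` is exactly the union of these facets.
As `ε ≤ (s+1)/2`, every such simplex has two vertices marked `0`, and as `s ≥ 3` the two facets
opposite to them share a vertex, so all vertices of the simplex are joined inside `|R_{c,ε}|`.
Two simplices of `|Δ_{(c,ε-1)}|` that meet share a vertex, so connectedness of `|Δ_{(c,ε-1)}|`
links the vertex sets of any two of them. Finally every point of `|R_{c,ε}|` lies in a convex facet
together with a vertex.
-/

open Finset Relation

theorem Fin.exists_perm_apply_iff_lt {n : ℕ} (p : Fin n → Prop) [DecidablePred p] :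
    ∃ σ : Equiv.Perm (Fin n), ∀ j, p (σ j) ↔ (j : ℕ) < #{j | p j} := by
  set k := #{j | p j}
  have hk : k ≤ n := (card_filter_le _ _).trans_eq (card_fin n)
  have e₁ : {j : Fin n // (j : ℕ) < k} ≃ {j // p j} := Fintype.equivOfCardEq <| by
    rw [Fintype.card_subtype, Fintype.card_subtype, Fin.card_filter_val_lt, min_eq_right hk]
  have e₂ : {j : Fin n // ¬(j : ℕ) < k} ≃ {j // ¬p j} := Fintype.equivOfCardEq <| by
    rw [Fintype.card_subtype_compl, Fintype.card_subtype_compl, Fintype.card_subtype,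
      Fintype.card_subtype, Fin.card_filter_val_lt, min_eq_right hk]
  refine ⟨Equiv.subtypeCongr e₁ e₂, fun j => ?_⟩
  by_cases hj : (j : ℕ) < k
  · simpa [Equiv.subtypeCongr, Equiv.sumCompl, hj] using (e₁ ⟨j, hj⟩).2
  · simpa [Equiv.subtypeCongr, Equiv.sumCompl, hj] using (e₂ ⟨j, hj⟩).2

theorem Fin.exists_eq_succAbove_comp_perm {n : ℕ} {g : Fin n → Fin (n + 1)}
    (hg : Function.Injective g) :
    ∃ (m : Fin (n + 1)) (τ : Equiv.Perm (Fin n)), g = m.succAbove ∘ τ := by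
  obtain ⟨m, hm⟩ : ∃ m, m ∉ Set.range g := by
    by_contra! h
    have := Fintype.card_le_of_surjective g fun i => h i
    simp at this
  choose τ hτ using fun j => Fin.exists_succAbove_eq fun h : g j = m => hm ⟨j, h⟩
  have hτ_inj : Function.Injective τ := fun j j' h => hg <| by rw [← hτ j, ← hτ j', h]
  exact ⟨m, Equiv.ofBijective τ (Finite.injective_iff_bijective.mp hτ_inj),
    funext fun j => (hτ j).symm⟩

theorem reflTransGen_of_isPreconnected_biUnion {X ι : Type*} [TopologicalSpace X] {t : Set ι}
    (ht : t.Finite) {K : ι → Set X} (hK : ∀ i ∈ t, IsClosed (K i))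
    (hU : IsPreconnected (⋃ i ∈ t, K i)) {i j : ι} (hi : i ∈ t) (hj : j ∈ t)
    (hKi : (K i).Nonempty) (hKj : (K j).Nonempty) :
    ReflTransGen (fun i j => i ∈ t ∧ j ∈ t ∧ (K i ∩ K j).Nonempty) i j := by
  by_contra hij
  let R := ReflTransGen (fun i j => i ∈ t ∧ j ∈ t ∧ (K i ∩ K j).Nonempty) i
  have hclosed : ∀ q : ι → Prop, IsClosed (⋃ l ∈ {l ∈ t | q l}, K l) := fun q =>
    (ht.sep q).isClosed_biUnion fun l hl => hK l hl.1
  have hcover : ⋃ i ∈ t, K i ⊆ (⋃ l ∈ {l ∈ t | R l}, K l) ∪ ⋃ l ∈ {l ∈ t | ¬R l}, K l :=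
    Set.iUnion₂_subset fun l hl => by
      by_cases hRl : R l
      · exact (Set.subset_biUnion_of_mem (u := K) (⟨hl, hRl⟩ : l ∈ {l ∈ t | R l})).trans
          Set.subset_union_left
      · exact (Set.subset_biUnion_of_mem (u := K) (⟨hl, hRl⟩ : l ∈ {l ∈ t | ¬R l})).trans
          Set.subset_union_right
  obtain ⟨x, -, hxC, hxD⟩ := isPreconnected_closed_iff.mp hU _ _ (hclosed R)
    (hclosed fun l => ¬R l) hcover
    (hKi.mono fun x hx => ⟨Set.mem_biUnion hi hx, Set.mem_biUnion ⟨hi, ReflTransGen.refl⟩ hx⟩)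
    (hKj.mono fun x hx => ⟨Set.mem_biUnion hj hx, Set.mem_biUnion ⟨hj, hij⟩ hx⟩)
  simp only [Set.mem_iUnion] at hxC hxD
  obtain ⟨l, ⟨hl, hRl⟩, hxl⟩ := hxC
  obtain ⟨l', ⟨hl', hRl'⟩, hxl'⟩ := hxD
  exact hRl' (hRl.tail ⟨hl, hl', x, hxl, hxl'⟩)

section Avec

variable {d k : ℕ}

theorem finite_Avec (d : ℕ) : (Avec d).Finite :=
  Set.Finite.subset (Set.Finite.pi (t := fun _ => Set.Icc (0 : ℤ) 1) fun _ => Set.finite_Icc 0 1)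
    fun v hv i _ => by
      rcases eq_or_ne i 0 with rfl | hi
      · simp [hv.1]
      · rcases hv.2 i hi with h | h <;> simp [h]

instance (d : ℕ) : Finite (Avec d) := (finite_Avec d).to_subtype

theorem sum_Avec_apply_zero (f : Fin k → Avec d) : (∑ i, (f i : Fin (d + 1) → ℤ)) 0 = k := by
  rw [Finset.sum_apply]
  exact (Finset.sum_congr rfl fun i _ => (f i).2.1).trans (by simp)

theorem Avec.apply_last_eq_zero_or_one (a : Avec (d + 1)) :
    (a : Fin (d + 2) → ℤ) (Fin.last (d + 1)) = 0 ∨ (a : Fin (d + 2) → ℤ) (Fin.last (d + 1)) = 1 :=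
  a.2.2 _ Fin.last_pos.ne'

def dropLast (a : Avec (d + 1)) : Avec d :=
  ⟨Fin.init (a : Fin (d + 2) → ℤ), a.2.1, fun _ hi => a.2.2 _ (Fin.castSucc_ne_zero_iff.2 hi)⟩

def liftTuple (α : Fin k → Avec d) (S : Finset (Fin k)) : Fin k → Avec (d + 1) :=
  fun i => if i ∈ S then app1 (α i) else app0 (α i)

theorem coe_liftTuple (α : Fin k → Avec d) (S : Finset (Fin k)) (i : Fin k) :
    (liftTuple α S i : Fin (d + 2) → ℤ) =
      Fin.snoc (α i : Fin (d + 1) → ℤ) (if i ∈ S then 1 else 0) := by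
  unfold liftTuple; split_ifs <;> rfl

theorem sum_liftTuple (α : Fin k → Avec d) (S : Finset (Fin k)) :
    ∑ i, (liftTuple α S i : Fin (d + 2) → ℤ) =
      Fin.snoc (∑ i, (α i : Fin (d + 1) → ℤ)) (#S : ℤ) := by
  funext j
  induction j using Fin.lastCases with
  | last => simp [coe_liftTuple, Finset.sum_apply]
  | cast j => simp [coe_liftTuple, Finset.sum_apply]

theorem liftTuple_dropLast (f : Fin k → Avec (d + 1)) :
    liftTuple (fun i => dropLast (f i)) {i | (f i : Fin (d + 2) → ℤ) (Fin.last (d + 1)) = 1} =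
      f := by
  funext i
  apply Subtype.ext
  rw [coe_liftTuple]
  conv_rhs => rw [← Fin.snoc_init_self (f i : Fin (d + 2) → ℤ)]
  congr 1
  rcases Avec.apply_last_eq_zero_or_one (f i) with h | h <;> simp [h]

end Avec

section Simplex

variable {d k n : ℕ}

def simplex (f : Fin k → Avec d) : Set (RA d) :=
  convexHull ℝ (Set.range fun i => eVec (f i))

def facet (f : Fin (n + 1) → Avec d) (m : Fin (n + 1)) : Set (RA d) :=
  simplex fun j => f (m.succAbove j)

theorem eVec_mem_simplex (f : Fin k → Avec d) (i : Fin k) : eVec (f i) ∈ simplex f :=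
  subset_convexHull ℝ _ ⟨i, rfl⟩

theorem isClosed_simplex (f : Fin k → Avec d) : IsClosed (simplex f) :=
  ((Set.finite_range _).isCompact_convexHull ℝ).isClosed

theorem eVec_mem_facet (f : Fin (n + 1) → Avec d) {m i : Fin (n + 1)} (hi : i ≠ m) :
    eVec (f i) ∈ facet f m := by
  obtain ⟨j, rfl⟩ := Fin.exists_succAbove_eq hi
  exact eVec_mem_simplex (fun j => f (m.succAbove j)) j

theorem joinedIn_facet (f : Fin (n + 1) → Avec d) (m : Fin (n + 1)) {x y : RA d}
    (hx : x ∈ facet f m) (hy : y ∈ facet f m) : JoinedIn (facet f m) x y :=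
  ((convex_convexHull ℝ _).isPathConnected ⟨x, hx⟩).joinedIn x hx y hy

theorem simplex_subset_sum_apply_eq (f : Fin k → Avec d) (W : Finset (Avec d)) (t : ℝ)
    (hf : ∀ i, (if f i ∈ W then 1 else 0) = t) : simplex f ⊆ {y | ∑ a ∈ W, y a = t} := by
  let L : RA d →ₗ[ℝ] ℝ := ∑ a ∈ W, LinearMap.proj a
  have hL : ∀ y, L y = ∑ a ∈ W, y a := fun y => by simp [L, LinearMap.sum_apply]
  simp_rw [← hL]
  refine convexHull_min (Set.range_subset_iff.2 fun i => ?_) (convex_hyperplane L.isLinear t)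
  simp [hL, eVec, ← hf i, Finset.sum_ite_eq']

theorem exists_eq_of_mem_simplex_of_mem_simplex {m : ℕ} {v : Fin m → Avec d}
    {w : Fin n → Avec d} {x : RA d} (hv : x ∈ simplex v) (hw : x ∈ simplex w) :
    ∃ i j, v i = w j := by
  classical
  by_contra! h
  -- the coordinates of `x` indexed by the vertices of `w` would sum to both `1` and `0`
  have h₁ := simplex_subset_sum_apply_eq w (univ.image w) 1 (fun j => by simp) hw
  have h₀ := simplex_subset_sum_apply_eq v (univ.image w) 0
    (fun i => if_neg (by simpa using fun j => (h i j).symm)) hv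
  simp_all

end Simplex

section Rset

variable {d n ε : ℕ} {c : Fin (d + 1) → ℤ}

def markedDecomps (d k : ℕ) (c : Fin (d + 1) → ℤ) (t : ℕ) :
    Set ((Fin k → Avec d) × Finset (Fin k)) :=
  {p | ∑ i, (p.1 i : Fin (d + 1) → ℤ) = c ∧ #p.2 = t}

theorem Delta_snoc_eq_biUnion {k : ℕ} (hc : c 0 = k) (t : ℕ) :
    Delta (d + 1) (Fin.snoc c (t : ℤ)) =
      ⋃ p ∈ markedDecomps d k c t, simplex (liftTuple p.1 p.2) := by
  ext x
  simp only [Delta, Set.mem_iUnion]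
  constructor
  · rintro ⟨k', f, hf, hx⟩
    obtain rfl : k' = k := by
      have h0 := sum_Avec_apply_zero f
      rw [hf] at h0
      simp [hc] at h0
      exact_mod_cast h0.symm
    rw [← liftTuple_dropLast f] at hf hx
    rw [sum_liftTuple] at hf
    obtain ⟨hα, hS⟩ := Fin.snoc_injective2 hf
    exact ⟨(_, _), ⟨hα, by exact_mod_cast hS⟩, hx⟩
  · rintro ⟨⟨α, S⟩, ⟨hα, hS⟩, hx⟩
    exact ⟨k, _, by rw [sum_liftTuple, hα, hS], hx⟩

theorem facet_subset_Rset {p : (Fin (n + 1) → Avec d) × Finset (Fin (n + 1))}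
    (hp : p ∈ markedDecomps d (n + 1) c (ε - 1)) {m : Fin (n + 1)} (hm : m ∉ p.2) :
    facet (liftTuple p.1 p.2) m ⊆ Rset d c ε := by
  classical
  obtain ⟨α, S⟩ := p
  have hcard : #{j | m.succAbove j ∈ S} = ε - 1 := by
    rw [← hp.2]
    refine Finset.card_bij (fun j _ => m.succAbove j) (by simp)
      (fun _ _ _ _ h => Fin.succAbove_right_injective h) fun i hi => ?_
    obtain ⟨j, rfl⟩ := Fin.exists_succAbove_eq (ne_of_mem_of_not_mem hi hm)
    exact ⟨j, by simpa using hi, rfl⟩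
  -- `σ` lists the vertices marked `1` first, as the indexing in `Rset` requires
  obtain ⟨σ, hσ⟩ := Fin.exists_perm_apply_iff_lt fun j => m.succAbove j ∈ S
  rw [hcard] at hσ
  intro x hx
  unfold facet simplex at hx
  simp only [Rset, Set.mem_iUnion]
  refine ⟨n + 1, α, hp.1, m.succAbove ∘ σ, Fin.succAbove_right_injective.comp σ.injective, ?_⟩
  convert hx using 2
  refine Eq.trans ?_ (σ.surjective.range_comp _)
  congr 1
  funext j
  simp [liftTuple, hσ]

theorem exists_facet_of_mem_Rset (hc : c 0 = n + 1) (hε : ε - 1 ≤ n) {x : RA (d + 1)}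
    (hx : x ∈ Rset d c ε) :
    ∃ p ∈ markedDecomps d (n + 1) c (ε - 1), ∃ m ∉ p.2, x ∈ facet (liftTuple p.1 p.2) m := by
  classical
  simp only [Rset, Set.mem_iUnion] at hx
  obtain ⟨s, α, hα, g, hg, hx⟩ := hx
  obtain rfl : s = n + 1 := by
    have h0 := sum_Avec_apply_zero α
    rw [hα, hc] at h0
    exact_mod_cast h0.symm
  obtain ⟨m, τ, rfl⟩ := Fin.exists_eq_succAbove_comp_perm (n := n) hg
  let S := (univ.filter fun j : Fin n => (j : ℕ) < ε - 1).map ⟨_, hg⟩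
  have hS : ∀ j, m.succAbove (τ j) ∈ S ↔ (j : ℕ) < ε - 1 := fun j => by simp [S]
  refine ⟨(α, S), ⟨hα, ?_⟩, m, ?_, ?_⟩
  · simp [S, Fin.card_filter_val_lt, hε]
  · simp [S]
  · unfold facet simplex
    convert hx using 2
    refine Eq.trans (τ.surjective.range_comp _).symm ?_
    congr 1
    funext j
    simp [liftTuple, hS]

theorem joinedIn_Rset_eVec_liftTuple (hn : 2 ≤ n) (hε : ε ≤ n)
    {p : (Fin (n + 1) → Avec d) × Finset (Fin (n + 1))}
    (hp : p ∈ markedDecomps d (n + 1) c (ε - 1)) (i i' : Fin (n + 1)) :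
    JoinedIn (Rset d c ε) (eVec (liftTuple p.1 p.2 i)) (eVec (liftTuple p.1 p.2 i')) := by
  classical
  have hjoin : ∀ {m k k'}, m ∉ p.2 → k ≠ m → k' ≠ m →
      JoinedIn (Rset d c ε) (eVec (liftTuple p.1 p.2 k)) (eVec (liftTuple p.1 p.2 k')) :=
    fun hm hk hk' => (joinedIn_facet _ _ (eVec_mem_facet _ hk) (eVec_mem_facet _ hk')).mono
      (facet_subset_Rset hp hm)
  have hcompl : 1 < #p.2ᶜ := by rw [card_compl, Fintype.card_fin, hp.2]; omega
  obtain ⟨m, hm, hmi⟩ := exists_mem_ne hcompl i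
  obtain ⟨m', hm', hmi'⟩ := exists_mem_ne hcompl i'
  obtain ⟨j, -, hj⟩ := exists_mem_notMem_of_card_lt_card (s := {m, m'}) (t := univ)
    (card_le_two.trans_lt (by simp; omega))
  rw [mem_insert, mem_singleton, not_or] at hj
  exact (hjoin (mem_compl.1 hm) hmi.symm hj.1).trans (hjoin (mem_compl.1 hm') hj.2 hmi'.symm)

theorem joinedIn_Rset_of_isPathConnected (hc : c 0 = n + 1) (hn : 2 ≤ n) (hε : ε ≤ n)
    (hΔ : IsPathConnected (Delta (d + 1) (Fin.snoc c ((ε - 1 : ℕ) : ℤ))))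
    {p q : (Fin (n + 1) → Avec d) × Finset (Fin (n + 1))}
    (hp : p ∈ markedDecomps d (n + 1) c (ε - 1)) (hq : q ∈ markedDecomps d (n + 1) c (ε - 1)) :
    JoinedIn (Rset d c ε) (eVec (liftTuple p.1 p.2 0)) (eVec (liftTuple q.1 q.2 0)) := by
  rw [Delta_snoc_eq_biUnion (by exact_mod_cast hc)] at hΔ
  have hchain := reflTransGen_of_isPreconnected_biUnion (Set.toFinite _)
    (fun p _ => isClosed_simplex _) hΔ.isConnected.isPreconnected hp hq
    ⟨_, eVec_mem_simplex _ 0⟩ ⟨_, eVec_mem_simplex _ 0⟩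
  induction hchain with
  | refl => exact joinedIn_Rset_eVec_liftTuple hn hε hp 0 0
  | tail _ hstep ih =>
    obtain ⟨hq₁, hq₂, x, hx₁, hx₂⟩ := hstep
    obtain ⟨i, j, hij⟩ := exists_eq_of_mem_simplex_of_mem_simplex hx₁ hx₂
    refine (ih hq₁).trans ((joinedIn_Rset_eVec_liftTuple hn hε hq₁ 0 i).trans ?_)
    rw [hij]
    exact joinedIn_Rset_eVec_liftTuple hn hε hq₂ j 0

end Rset

theorem Rset_pathConnected_general (d : ℕ) (c : Fin (d + 1) → ℤ)
    (s : ℕ) (hs : c 0 = (s : ℤ)) (hs3 : 3 ≤ s) (ε : ℕ) (hε2 : ε ≤ (s + 1) / 2)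
    (hΔ : (Delta (d + 1) (Fin.snoc c ((ε - 1 : ℕ) : ℤ))).Nonempty ∧
      IsPathConnected (Delta (d + 1) (Fin.snoc c ((ε - 1 : ℕ) : ℤ)))) :
    (Rset d c ε).Nonempty ∧ IsPathConnected (Rset d c ε) := by
  obtain ⟨n, rfl⟩ : ∃ n, s = n + 1 := ⟨s - 1, by omega⟩
  have hdeg : c 0 = n + 1 := by exact_mod_cast hs
  obtain ⟨hne, hconn⟩ := hΔ
  rw [Delta_snoc_eq_biUnion hs] at hne
  obtain ⟨p₀, hp₀, -⟩ : ∃ p ∈ markedDecomps d (n + 1) c (ε - 1), _ := by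
    simpa only [Set.nonempty_iUnion, exists_prop] using hne
  have hv₀ := (joinedIn_Rset_eVec_liftTuple (by omega) (by omega) hp₀ 0 0).source_mem
  have hjoin : ∀ x ∈ Rset d c ε, JoinedIn (Rset d c ε) x (eVec (liftTuple p₀.1 p₀.2 0)) := by
    intro x hx
    obtain ⟨p, hp, m, hm, hxm⟩ := exists_facet_of_mem_Rset hdeg (by omega) hx
    obtain ⟨i, hi⟩ : ∃ i, i ≠ m := ⟨m.succAbove ⟨0, by omega⟩, Fin.succAbove_ne _ _⟩
    have hx_i := (joinedIn_facet _ _ hxm (eVec_mem_facet _ hi)).mono (facet_subset_Rset hp hm)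
    exact (hx_i.trans (joinedIn_Rset_eVec_liftTuple (by omega) (by omega) hp i 0)).trans
      (joinedIn_Rset_of_isPathConnected hdeg (by omega) (by omega) hconn hp hp₀)
  exact ⟨⟨_, hv₀⟩, isPathConnected_iff.2 ⟨⟨_, hv₀⟩, fun x hx y hy =>
    (hjoin x hx).trans (hjoin y hy).symm⟩⟩

/-- Lemma on `R_{c,ε}`, case a): if `deg c = s ≥ 3` and `1 ≤ ε ≤ ⌊(s+1)/2⌋`, and
`|Δ_{(c,ε-1)}|` is nonempty and path-connected, then `|R_{c,ε}|` is nonempty and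
path-connected. -/
theorem Rset_pathConnected (d : ℕ) (hd : 1 ≤ d) (c : Fin (d + 1) → ℤ) (hc : c ∈ NA d)
    (s : ℕ) (hs : c 0 = (s : ℤ)) (hs3 : 3 ≤ s) (ε : ℕ) (hε1 : 1 ≤ ε) (hε2 : ε ≤ (s + 1) / 2)
    (hΔ : (Delta (d + 1) (Fin.snoc c ((ε - 1 : ℕ) : ℤ))).Nonempty ∧
      IsPathConnected (Delta (d + 1) (Fin.snoc c ((ε - 1 : ℕ) : ℤ)))) :
    (Rset d c ε).Nonempty ∧ IsPathConnected (Rset d c ε) :=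
  Rset_pathConnected_general d c s hs hs3 ε hε2 hΔ
end

section
/- Let d ≥ 1, let b ∈ ℕA_d with deg b = k, let l be an integer with 0 ≤ l ≤ k−1, and let ε ∈ {0,…,k}. If k − ε ≥ l + 1, then |F^l(Δ_b)| ⊆ |Δ_{(b,ε)}|. -/
open CategoryTheory

/-!
Write `b = a_1 + ⋯ + a_k` and let the simplex `conv {e_{(a_{i_0},0)}, …, e_{(a_{i_l},0)}}`
lie in `|F^l(Δ_b)|`. At most `l + 1` of the indices are used, so since `k - ε ≥ l + 1`
we can choose `ε` unused indices and append `1` to those `a_i` and `0` to all others.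
The lifted tuple sums to `(b, ε)`, and its simplex contains the given one as a face.
-/

open Finset

variable {d : ℕ}

theorem sum_apply_zero_of_Avec {k : ℕ} (a : Fin k → Avec d) :
    (∑ i, (a i : Fin (d + 1) → ℤ)) 0 = k := by
  simp [Finset.sum_apply, fun i => (a i).2.1]

theorem Finset.sum_fin_snoc {ι M : Type*} [AddCommMonoid M] (s : Finset ι) {n : ℕ}
    (v : ι → Fin n → M) (c : ι → M) :
    ∑ i ∈ s, (Fin.snoc (v i) (c i) : Fin (n + 1) → M) =
      Fin.snoc (∑ i ∈ s, v i) (∑ i ∈ s, c i) := by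
  funext m
  induction m using Fin.lastCases with
  | last => simp [Finset.sum_apply]
  | cast j => simp [Finset.sum_apply]

def markLast {k : ℕ} (a : Fin k → Avec d) (T : Finset (Fin k)) (i : Fin k) : Avec (d + 1) :=
  if i ∈ T then app1 (a i) else app0 (a i)

theorem coe_markLast {k : ℕ} (a : Fin k → Avec d) (T : Finset (Fin k)) (i : Fin k) :
    (markLast a T i : Fin (d + 2) → ℤ) =
      Fin.snoc (a i : Fin (d + 1) → ℤ) (if i ∈ T then 1 else 0) := by
  unfold markLast
  split_ifs <;> rfl

theorem sum_markLast {k : ℕ} (a : Fin k → Avec d) (T : Finset (Fin k)) :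
    ∑ i, (markLast a T i : Fin (d + 2) → ℤ) =
      Fin.snoc (∑ i, (a i : Fin (d + 1) → ℤ)) (#T : ℤ) := by
  simp only [coe_markLast, Finset.sum_fin_snoc, Finset.sum_boole, Finset.filter_mem_eq_inter,
    Finset.univ_inter]

theorem convexHull_app0_subset_markLast {k m : ℕ} (a : Fin k → Avec d) (T : Finset (Fin k))
    (idx : Fin m → Fin k) (hT : ∀ j, idx j ∉ T) :
    convexHull ℝ (Set.range fun j => eVec (app0 (a (idx j)))) ⊆
      convexHull ℝ (Set.range fun i => eVec (markLast a T i)) :=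
  convexHull_mono <| Set.range_subset_iff.2 fun j => ⟨idx j, by simp [markLast, hT j]⟩

theorem Finset.exists_card_eq_disjoint {α : Type*} [Fintype α] [DecidableEq α] (s : Finset α)
    {n : ℕ} (hn : n + #s ≤ Fintype.card α) : ∃ T : Finset α, #T = n ∧ Disjoint T s := by
  obtain ⟨T, hTs, hT⟩ := Finset.exists_subset_card_eq (s := sᶜ) (n := n)
    (by rw [card_compl]; omega)
  exact ⟨T, hT, Finset.subset_compl_iff_disjoint_right.1 hTs⟩

theorem Fset_subset_Delta_general (d : ℕ) (b : Fin (d + 1) → ℤ)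
    (k : ℕ) (hk : b 0 = (k : ℤ)) (l : ℕ) (ε : ℕ)
    (hcone : l + 1 ≤ k - ε) :
    Fset d b l ⊆ Delta (d + 1) (Fin.snoc b (ε : ℤ)) := by
  intro x hx
  simp only [Fset, Set.mem_iUnion] at hx
  obtain ⟨k', a, rfl, idx, hx⟩ := hx
  obtain rfl : k' = k := by
    have := sum_apply_zero_of_Avec a
    omega
  have hunused : ε + #(univ.image idx) ≤ Fintype.card (Fin k') := by
    have := (card_image_le (s := univ) (f := idx)).trans_eq (card_fin (l + 1))
    rw [Fintype.card_fin]
    omega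
  obtain ⟨T, hTcard, hT⟩ := Finset.exists_card_eq_disjoint _ hunused
  simp only [Delta, Set.mem_iUnion]
  refine ⟨k', markLast a T, by rw [sum_markLast, hTcard], ?_⟩
  refine convexHull_app0_subset_markLast a T idx (fun j hj => ?_) hx
  exact Finset.disjoint_left.1 hT hj (mem_image_of_mem idx (mem_univ j))

/-- If `deg b = k`, `0 ≤ l ≤ k - 1`, `ε ∈ {0, …, k}` and `k - ε ≥ l + 1`, then
`|F^l(Δ_b)| ⊆ |Δ_{(b,ε)}|`. -/
theorem Fset_subset_Delta (d : ℕ) (hd : 1 ≤ d) (b : Fin (d + 1) → ℤ) (hb : b ∈ NA d)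
    (k : ℕ) (hk : b 0 = (k : ℤ)) (l : ℕ) (hl : l ≤ k - 1) (ε : ℕ) (hε : ε ≤ k)
    (hcone : l + 1 ≤ k - ε) :
    Fset d b l ⊆ Delta (d + 1) (Fin.snoc b (ε : ℤ)) :=
  Fset_subset_Delta_general d b k hk l ε hcone
end
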